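/- Let G be a just non-Dedekind (JND) group with nontrivial center Z(G) ≠ 1. Then G is a solvable just nonabelian (JNA) group; in particular, G is nonabelian, G/N is abelian for every nontrivial normal subgroup N of G, and G is solvable. -/

import Mathlib

/-- A group is Dedekind if every subgroup of it is normal. -/
def IsDedekind (G : Type*) [Group G] : Prop := ∀ H : Subgroup G, H.Normal

/-- A group is just non-Dedekind (JND) if it is not Dedekind but every quotient
by a nontrivial normal subgroup is Dedekind. -/
def IsJND (G : Type*) [Group G] : Prop :=
  ¬ IsDedekind G ∧
    ∀ (N : Subgroup G) (hN : N.Normal), N ≠ ⊥ →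
      letI := hN
      IsDedekind (G ⧸ N)

/-- A group is just nonabelian (JNA) if it is nonabelian but every quotient
by a nontrivial normal subgroup is abelian. -/
def IsJNA (G : Type*) [Group G] : Prop :=
  (∃ a b : G, a * b ≠ b * a) ∧
    ∀ (N : Subgroup G) (hN : N.Normal), N ≠ ⊥ →
      letI := hN
      ∀ x y : G ⧸ N, x * y = y * x

/-!
Let `s` be a central element of prime order `p` (the centre is torsion: for central `z` of
infinite order, the conjugates of a non-normal `H` would lie in every `H ⊔ ⟨z ^ n⟩`, hence in `H`).
Since `H ⊔ N` is normal for every subgroup `H` and nontrivial normal `N`, a non-normal cyclic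
subgroup `⟨x⟩` has exponent `p`, meets the centre trivially and is central modulo `⟨s⟩`; with the
modular law this puts `s` into every nontrivial normal subgroup. The Dedekind group `G ⧸ ⟨s⟩` is
abelian: otherwise a minimal non-commuting pair in it generates a quaternion group `Q₈`, and a
lift `a` of an element of order `4` generates a normal subgroup containing `s`, so `a ^ 4 ≠ 1`;
for odd `p` this fails for `a ^ p`, and for `p = 2` the quaternion relations force `a ^ 4 = 1`.
Hence `⁅G, G⁆ ≤ ⟨s⟩ ≤ Z(G)` lies in every nontrivial normal subgroup.
-/

open Subgroup
open scoped commutatorElement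

section ZPowers

variable {G : Type*} [Group G]

theorem commute_of_mem_zpowers {g h : G} (hh : h ∈ zpowers g) : Commute h g := by
  obtain ⟨k, rfl⟩ := mem_zpowers_iff.mp hh
  exact (Commute.refl g).zpow_left k

theorem ne_one_of_prime_orderOf {g : G} (hg : (orderOf g).Prime) : g ≠ 1 :=
  fun h => hg.ne_one (orderOf_eq_one_iff.mpr h)

theorem pow_orderOf_eq_one_of_mem_zpowers {g h : G} (hh : h ∈ zpowers g) : h ^ orderOf g = 1 :=
  orderOf_dvd_iff_pow_eq_one.mp (orderOf_dvd_of_mem_zpowers hh)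

theorem mem_zpowers_of_prime_orderOf {g h : G} (hg : (orderOf g).Prime) (hh : h ∈ zpowers g)
    (h1 : h ≠ 1) : g ∈ zpowers h := by
  obtain ⟨k, rfl⟩ := mem_zpowers_iff.mp hh
  have hk : ¬(orderOf g : ℤ) ∣ k := fun hd => h1 (orderOf_dvd_iff_zpow_eq_one.mp hd)
  rw [mem_zpowers_zpow_iff]
  exact ((Nat.Prime.coprime_iff_not_dvd hg).mpr (by rwa [← Int.natCast_dvd])).symm

theorem mem_zpowers_pow_of_pow_eq_one {g h : G} {n q : ℕ} (hg : orderOf g = n * q) (hq : q ≠ 0)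
    (hh : h ∈ zpowers g) (hhq : h ^ q = 1) : h ∈ zpowers (g ^ n) := by
  obtain ⟨k, rfl⟩ := mem_zpowers_iff.mp hh
  have hdvd : ((n * q : ℕ) : ℤ) ∣ k * q := by
    rw [← hg, orderOf_dvd_iff_zpow_eq_one, zpow_mul, zpow_natCast, hhq]
  obtain ⟨m, rfl⟩ : (n : ℤ) ∣ k := by
    push_cast at hdvd
    exact Int.dvd_of_mul_dvd_mul_right (by exact_mod_cast hq) hdvd
  exact mem_zpowers_iff.mpr ⟨m, by rw [← zpow_natCast, ← zpow_mul]⟩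

theorem eq_of_mem_zpowers_of_orderOf_eq_two {g h : G} (hg : orderOf g = 2) (hh : h ∈ zpowers g)
    (h1 : h ≠ 1) : h = g := by
  obtain ⟨k, rfl⟩ := mem_zpowers_iff.mp hh
  rw [← zpow_mod_orderOf, hg] at h1 ⊢
  rcases Int.emod_two_eq k with hk | hk <;> simp_all

theorem exists_eq_orderOf_pow_of_pow_prime_eq_one {c : G} {m : ℕ} (hc : c ≠ 1) (hm : m ≠ 0)
    (h : ∀ r, r.Prime → r ∣ m → c ^ r = 1) : ∃ k, m = orderOf c ^ k := by
  refine ⟨_, Nat.eq_prime_pow_of_unique_prime_dvd hm fun {r} hr hrm => ?_⟩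
  have := Fact.mk hr
  exact (orderOf_eq_prime (h r hr hrm) hc).symm

end ZPowers

section Commutators

variable {G : Type*} [Group G]

theorem commute_of_mem_center {z : G} (hz : z ∈ center G) (g : G) : Commute z g :=
  (mem_center_iff.mp hz g).symm

theorem commutatorElement_zpow_right {x y : G} (h : Commute ⁅y, x⁆ x) (n : ℤ) :
    ⁅y, x ^ n⁆ = ⁅y, x⁆ ^ n := by
  have hconj : y * x * y⁻¹ = ⁅y, x⁆ * x := by rw [commutatorElement_def]; group
  rw [commutatorElement_def, ← conj_zpow, hconj, h.mul_zpow, mul_inv_cancel_right]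

theorem commutatorElement_pow_right {x y : G} (h : Commute ⁅y, x⁆ x) (n : ℕ) :
    ⁅y, x ^ n⁆ = ⁅y, x⁆ ^ n := by
  simpa only [zpow_natCast] using commutatorElement_zpow_right h n

theorem commutatorElement_pow_left {x y : G} (h : Commute ⁅y, x⁆ y) (n : ℕ) :
    ⁅y ^ n, x⁆ = ⁅y, x⁆ ^ n := by
  have h' : Commute ⁅x, y⁆ y := by rw [← commutatorElement_inv]; exact h.inv_left
  rw [← commutatorElement_inv, commutatorElement_pow_right h', ← commutatorElement_inv, inv_pow,
    inv_inv]

theorem commutatorElement_mul_of_mem_center {c : G} (hc : c ∈ center G) (g a : G) :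
    ⁅g, a * c⁆ = ⁅g, a⁆ := by
  rw [commutatorElement_def, commutatorElement_def, mul_inv_rev, ← mul_assoc g a c,
    mul_assoc (g * a) c, ← mem_center_iff.mp hc g⁻¹]
  group

theorem mul_pow_eq_of_commute_commutatorElement {a y : G} (hy : Commute ⁅a, y⁆ y)
    (ha : Commute ⁅a, y⁆ a) (n : ℕ) :
    (y * a) ^ n = y ^ n * a ^ n * ⁅a, y⁆ ^ n.choose 2 := by
  induction n with
  | zero => simp
  | succ n ih =>
    set d := ⁅a, y⁆
    have hswap : a ^ n * y = d ^ n * (y * a ^ n) := by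
      rw [← commutatorElement_pow_left ha, commutatorElement_def]; group
    have hdya : Commute (d ^ n) (y ^ (n + 1) * a ^ (n + 1)) :=
      (hy.pow_pow n (n + 1)).mul_right (ha.pow_pow n (n + 1))
    rw [pow_succ (y * a), ih, Nat.choose_succ_succ', Nat.choose_one_right, pow_add d]
    calc y ^ n * a ^ n * d ^ n.choose 2 * (y * a)
        = y ^ n * (a ^ n * y) * a * d ^ n.choose 2 := by
          rw [mul_assoc _ (d ^ _), ((hy.pow_left _).mul_right (ha.pow_left _)).eq]; group
      _ = d ^ n * (y ^ (n + 1) * a ^ (n + 1)) * d ^ n.choose 2 := by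
          rw [hswap, ← mul_assoc (y ^ n), ← (hy.pow_pow n n).eq]; group
      _ = y ^ (n + 1) * a ^ (n + 1) * (d ^ n * d ^ n.choose 2) := by rw [hdya.eq, mul_assoc]

theorem pow_four_eq_one_of_commutatorElement_eq {x y d : G} (hdx : Commute d x) (hd : d ^ 2 = 1)
    (hyx : ⁅y, x⁆ = x ^ 2 * d) (hy : Commute y (x ^ 2)) : x ^ 4 = 1 := by
  have hconj : y * x * y⁻¹ = x ^ 3 * d := by
    rw [← inv_mul_cancel_right (y * x * y⁻¹) x, ← commutatorElement_def, hyx, mul_assoc, hdx.eq]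
    group
  have h6 : x ^ 2 = x ^ 6 := by
    calc x ^ 2 = y * x ^ 2 * y⁻¹ := by rw [hy.eq, mul_inv_cancel_right]
      _ = (x ^ 3 * d) ^ 2 := by rw [← conj_pow, hconj]
      _ = x ^ 6 := by rw [(hdx.pow_right 3).symm.mul_pow, hd, mul_one, ← pow_mul]
  rwa [show 6 = 2 + 4 by rfl, pow_add, left_eq_mul] at h6

end Commutators

section Dedekind

variable {Q : Type*} [Group Q]

def IsQuaternionPair (a b : Q) : Prop :=
  orderOf a = 4 ∧ ⁅b, a⁆ = a ^ 2 ∧ ⁅b, a⁆ = b ^ 2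

namespace IsDedekind

theorem commutatorElement_mem_zpowers_right (hQ : IsDedekind Q) (y x : Q) :
    ⁅y, x⁆ ∈ zpowers x :=
  mul_mem ((hQ _).conj_mem x (mem_zpowers x) y) (inv_mem (mem_zpowers x))

theorem commutatorElement_mem_zpowers_left (hQ : IsDedekind Q) (y x : Q) :
    ⁅y, x⁆ ∈ zpowers y := by
  rw [commutatorElement_def, mul_assoc y, mul_assoc y]
  exact mul_mem (mem_zpowers y) ((hQ _).conj_mem _ (inv_mem (mem_zpowers y)) x)

theorem commute_commutatorElement_right (hQ : IsDedekind Q) (y x : Q) : Commute ⁅y, x⁆ x :=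
  commute_of_mem_zpowers (hQ.commutatorElement_mem_zpowers_right y x)

theorem commute_commutatorElement_left (hQ : IsDedekind Q) (y x : Q) : Commute ⁅y, x⁆ y :=
  commute_of_mem_zpowers (hQ.commutatorElement_mem_zpowers_left y x)

theorem isOfFinOrder_of_not_commute (hQ : IsDedekind Q) {x y : Q} (h : ¬Commute y x) :
    IsOfFinOrder x := by
  obtain ⟨m, hm⟩ := mem_zpowers_iff.mp (hQ.commutatorElement_mem_zpowers_right y x)
  have hc : ⁅y, x⁆ ≠ 1 := mt commutatorElement_eq_one_iff_commute.mp h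
  have hm0 : m ≠ 0 := by rintro rfl; exact hc (by rw [← hm, zpow_zero])
  refine isOfFinOrder_iff_zpow_eq_one.mpr ⟨m * m, mul_ne_zero hm0 hm0, ?_⟩
  rw [zpow_mul, hm, ← commutatorElement_zpow_right (hQ.commute_commutatorElement_right y x), hm,
    commutatorElement_eq_one_iff_commute]
  exact (hQ.commute_commutatorElement_left y x).symm

theorem exists_commutatorElement_eq_and_pow_eq_one (hQ : IsDedekind Q) {x y : Q} {q j l : ℕ}
    (hq : q.Prime) (hc : orderOf ⁅y, x⁆ = q) (hx : orderOf x = q ^ (j + (l + 1)))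
    (hy : orderOf y = q ^ (l + 1)) (hdvd : q ∣ q ^ j * (q ^ l).choose 2) :
    ∃ w : Q, ⁅w, x⁆ = ⁅y, x⁆ ∧ w ^ q ^ l = 1 := by
  set c := ⁅y, x⁆
  have hcq : c ^ q = 1 := hc ▸ pow_orderOf_eq_one c
  have hc1 : c ≠ 1 := ne_one_of_prime_orderOf (hc ▸ hq)
  have hyl : (orderOf (y ^ q ^ l)).Prime := by
    rwa [orderOf_pow_of_dvd (pow_ne_zero _ hq.ne_zero) (hy ▸ pow_dvd_pow q l.le_succ), hy,
      pow_succ, Nat.mul_div_cancel_left _ (pow_pos hq.pos l)]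
  have hyc : y ^ q ^ l ∈ zpowers c :=
    mem_zpowers_of_prime_orderOf hyl (mem_zpowers_pow_of_pow_eq_one (by rw [hy, pow_succ])
      hq.ne_zero (hQ.commutatorElement_mem_zpowers_left y x) hcq) hc1
  have hcx : c ∈ zpowers (x ^ (q ^ j * q ^ l)) :=
    mem_zpowers_pow_of_pow_eq_one (by rw [hx, ← add_assoc, pow_succ, pow_add]) hq.ne_zero
      (hQ.commutatorElement_mem_zpowers_right y x) hcq
  obtain ⟨t, ht⟩ := mem_zpowers_iff.mp (zpowers_le.mpr hcx hyc)
  -- `a ^ q ^ l` cancels `y ^ q ^ l`; the correction term `⁅a, y⁆ ^ (q ^ l).choose 2` dies by `hdvd`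
  set a := x ^ (-((q ^ j : ℕ) * t))
  have hay : ⁅a, y⁆ = c ^ ((q ^ j : ℕ) * t) := by
    rw [← commutatorElement_inv,
      commutatorElement_zpow_right (hQ.commute_commutatorElement_right y x), zpow_neg, inv_inv]
  refine ⟨y * a, ?_, ?_⟩
  · have hax : a * x * a⁻¹ = x := by
      rw [((Commute.refl x).zpow_left _).eq, mul_inv_cancel_right]
    calc ⁅y * a, x⁆ = y * (a * x * a⁻¹) * y⁻¹ * x⁻¹ := by rw [commutatorElement_def]; group
      _ = c := by rw [hax]; rfl
  · have hya : y ^ q ^ l * a ^ q ^ l = 1 := by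
      rw [← ht, ← zpow_natCast, ← zpow_natCast (x ^ _), ← zpow_mul, ← zpow_mul, ← zpow_add,
        Nat.cast_mul, ← zpow_zero x]
      congr 1
      ring
    rw [mul_pow_eq_of_commute_commutatorElement (hQ.commute_commutatorElement_right a y)
      (hQ.commute_commutatorElement_left a y), hya, one_mul, hay, ← zpow_natCast (c ^ _),
      ← zpow_mul, ← orderOf_dvd_iff_zpow_eq_one, hc, mul_right_comm]
    exact dvd_mul_of_dvd_left (by exact_mod_cast hdvd) t

theorem isQuaternionPair_or_exists_commutatorElement_eq (hQ : IsDedekind Q) {x y : Q} {q j l : ℕ}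
    (hq : q.Prime) (hc : orderOf ⁅y, x⁆ = q) (hx : orderOf x = q ^ (j + (l + 1)))
    (hy : orderOf y = q ^ (l + 1)) :
    IsQuaternionPair x y ∨ ∃ w : Q, ⁅w, x⁆ = ⁅y, x⁆ ∧ w ^ q ^ l = 1 := by
  by_cases hQ8 : j = 0 ∧ q ^ l = 2
  · obtain ⟨rfl, hql⟩ := hQ8
    obtain ⟨rfl, rfl⟩ := (Nat.prime_two.pow_eq_iff).mp hql
    have hc1 : ⁅y, x⁆ ≠ 1 := ne_one_of_prime_orderOf (hc ▸ Nat.prime_two)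
    have hc2 : ⁅y, x⁆ ^ 2 = 1 := hc ▸ pow_orderOf_eq_one _
    have hsq : ∀ {g : Q}, orderOf g = 2 * 2 → ⁅y, x⁆ ∈ zpowers g → ⁅y, x⁆ = g ^ 2 :=
      fun hg hmem => eq_of_mem_zpowers_of_orderOf_eq_two
        (by rw [orderOf_pow_of_dvd two_ne_zero (hg ▸ dvd_mul_left 2 2), hg])
        (mem_zpowers_pow_of_pow_eq_one hg two_ne_zero hmem hc2) hc1
    exact .inl ⟨hx, hsq hx (hQ.commutatorElement_mem_zpowers_right y x),
      hsq hy (hQ.commutatorElement_mem_zpowers_left y x)⟩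
  · refine .inr (hQ.exists_commutatorElement_eq_and_pow_eq_one hq hc hx hy ?_)
    rcases Nat.eq_zero_or_pos j with rfl | hj
    · exact dvd_mul_of_dvd_right (hq.dvd_choose_pow two_ne_zero fun h2 => hQ8 ⟨rfl, h2.symm⟩) _
    · exact dvd_mul_of_dvd_left (dvd_pow_self q hj.ne') _

theorem exists_isQuaternionPair (hQ : IsDedekind Q) {x y : Q} (h : ¬Commute y x) :
    ∃ a b : Q, IsQuaternionPair a b := by
  obtain ⟨n, hn⟩ : ∃ n, orderOf x * orderOf y = n := ⟨_, rfl⟩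
  induction n using Nat.strong_induction_on generalizing x y with
  | _ n ih =>
  wlog hyx : orderOf y ≤ orderOf x generalizing x y
  · exact this (fun h' => h h'.symm) (by rw [mul_comm, hn]) (le_of_not_ge hyx)
  by_contra hno
  set c := ⁅y, x⁆
  have hc : c ≠ 1 := mt commutatorElement_eq_one_iff_commute.mp h
  have hx0 : orderOf x ≠ 0 := (hQ.isOfFinOrder_of_not_commute h).orderOf_pos.ne'
  have hy0 : orderOf y ≠ 0 :=
    (hQ.isOfFinOrder_of_not_commute fun h' => h h'.symm).orderOf_pos.ne'
  -- by minimality of `orderOf x * orderOf y`, every prime dividing it kills `c`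
  have hxq : ∀ r, r.Prime → r ∣ orderOf x → c ^ r = 1 := by
    intro r hr hrx
    by_contra hcr
    refine hno (ih _ ?_ (x := x ^ r) (y := y) ?_ rfl)
    · rw [← hn, orderOf_pow_of_dvd hr.ne_zero hrx]
      exact Nat.mul_lt_mul_of_pos_right (Nat.div_lt_self (Nat.pos_of_ne_zero hx0) hr.one_lt)
        (Nat.pos_of_ne_zero hy0)
    · rwa [← commutatorElement_eq_one_iff_commute,
        commutatorElement_pow_right (hQ.commute_commutatorElement_right y x)]
  have hyq : ∀ r, r.Prime → r ∣ orderOf y → c ^ r = 1 := by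
    intro r hr hry
    by_contra hcr
    refine hno (ih _ ?_ (x := x) (y := y ^ r) ?_ rfl)
    · rw [← hn, orderOf_pow_of_dvd hr.ne_zero hry]
      exact Nat.mul_lt_mul_of_pos_left (Nat.div_lt_self (Nat.pos_of_ne_zero hy0) hr.one_lt)
        (Nat.pos_of_ne_zero hx0)
    · rwa [← commutatorElement_eq_one_iff_commute,
        commutatorElement_pow_left (hQ.commute_commutatorElement_left y x)]
  have hx1 : orderOf x ≠ 1 := fun h1 => h (orderOf_eq_one_iff.mp h1 ▸ Commute.one_right y)
  have hy1 : orderOf y ≠ 1 := fun h1 => h (orderOf_eq_one_iff.mp h1 ▸ Commute.one_left x)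
  have hq : (orderOf c).Prime := by
    have hr := Nat.minFac_prime hx1
    have := Fact.mk hr
    rwa [orderOf_eq_prime (hxq _ hr (Nat.minFac_dvd _)) hc]
  obtain ⟨k, hk⟩ := exists_eq_orderOf_pow_of_pow_prime_eq_one hc hx0 hxq
  obtain ⟨l, hl⟩ := exists_eq_orderOf_pow_of_pow_prime_eq_one hc hy0 hyq
  obtain ⟨l, rfl⟩ : ∃ l', l = l' + 1 :=
    Nat.exists_eq_succ_of_ne_zero (by rintro rfl; exact hy1 (by rw [hl, pow_zero]))
  obtain ⟨j, rfl⟩ : ∃ j, k = j + (l + 1) :=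
    ⟨k - (l + 1), by have := (Nat.pow_le_pow_iff_right hq.one_lt).mp (hl ▸ hk ▸ hyx); omega⟩
  rcases hQ.isQuaternionPair_or_exists_commutatorElement_eq hq rfl hk hl with hQ8 | ⟨w, hw, hwq⟩
  · exact hno ⟨x, y, hQ8⟩
  · refine hno (ih _ ?_ (x := x) (y := w) ?_ rfl)
    · rw [← hn, hl]
      refine Nat.mul_lt_mul_of_pos_left ?_ (Nat.pos_of_ne_zero hx0)
      exact (orderOf_le_of_pow_eq_one (pow_pos hq.pos l) hwq).trans_lt
        (Nat.pow_lt_pow_right hq.one_lt l.lt_succ_self)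
    · rwa [← commutatorElement_eq_one_iff_commute, hw]

end IsDedekind

end Dedekind
section JND

variable {G : Type*} [Group G]

theorem normal_zpowers_of_mem_center {z : G} (hz : z ∈ center G) : (zpowers z).Normal :=
  ⟨fun n hn g => by rwa [mem_center_iff.mp (zpowers_le.mpr hz hn) g, mul_inv_cancel_right]⟩

theorem exists_mul_zpow_eq_of_mem_sup {H : Subgroup G} {z g : G} (hz : z ∈ center G)
    (hg : g ∈ H ⊔ zpowers z) : ∃ h ∈ H, ∃ k : ℤ, h * z ^ k = g := by
  have := normal_zpowers_of_mem_center hz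
  obtain ⟨h, hh, _, ⟨k, rfl⟩, rfl⟩ := mem_sup_of_normal_right.mp hg
  exact ⟨h, hh, k, rfl⟩

namespace IsJND

theorem exists_not_normal_zpowers (hG : IsJND G) : ∃ g : G, ¬(zpowers g).Normal := by
  by_contra! h
  exact hG.1 fun H => ⟨fun n hn g => zpowers_le.mpr hn ((h n).conj_mem n (mem_zpowers n) g)⟩

theorem sup_normal (hG : IsJND G) (H : Subgroup G) {N : Subgroup G} (hN : N.Normal)
    (hN1 : N ≠ ⊥) : (H ⊔ N).Normal := by
  have h := (hG.2 N hN hN1 (H.map (QuotientGroup.mk' N))).comap (QuotientGroup.mk' N)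
  rwa [comap_map_eq, QuotientGroup.ker_mk'] at h

theorem sup_zpowers_normal (hG : IsJND G) (H : Subgroup G) {s : G} (hs : s ∈ center G)
    (hs1 : s ≠ 1) : (H ⊔ zpowers s).Normal :=
  hG.sup_normal H (normal_zpowers_of_mem_center hs) (zpowers_ne_bot.mpr hs1)

theorem eq_bot_of_le_of_not_normal (hG : IsJND G) {H N : Subgroup G} (hH : ¬H.Normal)
    (hN : N.Normal) (hNH : N ≤ H) : N = ⊥ := by
  by_contra hN1
  exact hH (sup_of_le_left hNH ▸ hG.sup_normal H hN hN1)

theorem eq_one_of_mem_center_of_not_normal (hG : IsJND G) {H : Subgroup G} (hH : ¬H.Normal)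
    {z : G} (hz : z ∈ center G) (hzH : z ∈ H) : z = 1 :=
  zpowers_eq_bot.mp
    (hG.eq_bot_of_le_of_not_normal hH (normal_zpowers_of_mem_center hz) (zpowers_le.mpr hzH))

theorem pow_orderOf_eq_one_of_not_normal (hG : IsJND G) {s : G} (hs : s ∈ center G)
    (hs1 : s ≠ 1) {H : Subgroup G} (hH : ¬H.Normal) {h : G} (hh : h ∈ H) :
    h ^ orderOf s = 1 := by
  have hcore := hG.eq_bot_of_le_of_not_normal hH (normalCore_normal H) (normalCore_le H)
  have hmem : h ^ orderOf s ∈ H.normalCore := fun g => by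
    obtain ⟨t, ht, k, hk⟩ := exists_mul_zpow_eq_of_mem_sup hs
      ((hG.sup_zpowers_normal H hs hs1).conj_mem h (mem_sup_left hh) g)
    rw [← conj_pow, ← hk, (commute_of_mem_center (zpow_mem hs k) t).symm.mul_pow,
      pow_orderOf_eq_one_of_mem_zpowers (zpow_mem (mem_zpowers s) k), mul_one]
    exact pow_mem ht _
  rwa [hcore, mem_bot] at hmem

theorem isOfFinOrder_of_mem_center (hG : IsJND G) {z : G} (hz : z ∈ center G) :
    IsOfFinOrder z := by
  by_contra hz'
  obtain ⟨H, hH⟩ : ∃ H : Subgroup G, ¬H.Normal := by simpa [IsDedekind] using hG.1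
  refine hH ⟨fun h hh g => ?_⟩
  have hconj : ∀ n : ℤ, n ≠ 0 → ∃ t ∈ H, ∃ m : ℤ, t * z ^ (n * m) = g * h * g⁻¹ := by
    intro n hn
    have hzn : z ^ n ∈ center G := zpow_mem hz n
    have hzn1 : z ^ n ≠ 1 := fun h1 => hz' (isOfFinOrder_iff_zpow_eq_one.mpr ⟨n, hn, h1⟩)
    obtain ⟨t, ht, m, hm⟩ := exists_mul_zpow_eq_of_mem_sup hzn
      ((hG.sup_zpowers_normal H hzn hzn1).conj_mem h (mem_sup_left hh) g)
    exact ⟨t, ht, m, by rw [zpow_mul, hm]⟩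
  obtain ⟨t, ht, m, hm⟩ := hconj 1 one_ne_zero
  obtain ⟨t', ht', m', hm'⟩ := hconj (|m| + 1) (by positivity)
  -- `t'⁻¹ * t` is central and lies in `H`, so `|m| + 1` divides `m`
  have htt : t'⁻¹ * t = z ^ ((|m| + 1) * m' - 1 * m) := by
    rw [eq_mul_inv_of_mul_eq hm, eq_mul_inv_of_mul_eq hm']
    group
  have hm0 : (|m| + 1) * m' - 1 * m = 0 := by
    refine injective_zpow_iff_not_isOfFinOrder.mpr hz' ?_
    simp only [zpow_zero, ← htt]
    exact hG.eq_one_of_mem_center_of_not_normal hH (htt ▸ zpow_mem hz _)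
      (mul_mem (inv_mem ht') ht)
  have : m = 0 := Int.eq_zero_of_abs_lt_dvd ⟨m', by linarith⟩ (lt_add_one _)
  rw [← hm, this, mul_zero, zpow_zero, mul_one]
  exact ht

theorem exists_prime_orderOf_mem_center (hG : IsJND G) (hZ : center G ≠ ⊥) :
    ∃ s ∈ center G, (orderOf s).Prime := by
  obtain ⟨z, hz, hz1⟩ := ((center G).bot_or_exists_ne_one).resolve_left hZ
  have hp := Nat.minFac_prime (mt orderOf_eq_one_iff.mp hz1)
  refine ⟨z ^ (orderOf z / (orderOf z).minFac), pow_mem hz _, ?_⟩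
  rwa [orderOf_pow_orderOf_div (hG.isOfFinOrder_of_mem_center hz).orderOf_pos.ne'
    (Nat.minFac_dvd _)]

section CentralPrime

variable {s : G}

theorem commutatorElement_mem_zpowers_of_not_normal (hG : IsJND G) (hs : s ∈ center G)
    (hp : (orderOf s).Prime) {x : G} (hx : ¬(zpowers x).Normal) (y : G) :
    ⁅y, x⁆ ∈ zpowers s := by
  have hs1 := ne_one_of_prime_orderOf hp
  have hx1 : x ≠ 1 := by rintro rfl; exact hx (by rw [zpowers_one_eq_bot]; infer_instance)
  have hxp : (orderOf x).Prime := by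
    have := Fact.mk hp
    rwa [orderOf_eq_prime (hG.pow_orderOf_eq_one_of_not_normal hs hs1 hx (mem_zpowers x)) hx1]
  -- `y * x * y⁻¹ = x ^ i * s ^ j`; if `x ^ (i - 1) ≠ 1`, it generates `⟨x⟩`, which then lies in
  -- the abelian group `⟨y⟩ ⊔ ⟨s⟩`
  obtain ⟨_, ⟨i, rfl⟩, j, hij⟩ := exists_mul_zpow_eq_of_mem_sup hs
    ((hG.sup_zpowers_normal _ hs hs1).conj_mem x (mem_sup_left (mem_zpowers x)) y)
  have hyx : ⁅y, x⁆ = x ^ (i - 1) * s ^ j := by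
    rw [commutatorElement_def, ← hij, zpow_sub_one, mul_assoc,
      (commute_of_mem_center (zpow_mem hs j) _).eq, ← mul_assoc]
  by_cases hi : x ^ (i - 1) = 1
  · rw [hyx, hi, one_mul]
    exact zpow_mem (mem_zpowers s) j
  · have hyxy : ⁅y, x⁆ ∈ zpowers y ⊔ zpowers s := by
      rw [commutatorElement_def, mul_assoc y, mul_assoc y]
      exact mul_mem (mem_sup_left (mem_zpowers y))
        ((hG.sup_zpowers_normal _ hs hs1).conj_mem _ (inv_mem (mem_sup_left (mem_zpowers y))) x)
    have hxi : x ^ (i - 1) ∈ zpowers y ⊔ zpowers s := by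
      rw [eq_mul_inv_of_mul_eq hyx.symm]
      exact mul_mem hyxy (inv_mem (mem_sup_right (zpow_mem (mem_zpowers s) j)))
    obtain ⟨_, ⟨m, rfl⟩, k, hmk⟩ := exists_mul_zpow_eq_of_mem_sup hs
      (zpowers_le.mpr hxi (mem_zpowers_of_prime_orderOf hxp (zpow_mem (mem_zpowers x) _) hi))
    rw [commutatorElement_eq_one_iff_commute.mpr (hmk ▸ ((Commute.refl y).zpow_right m).mul_right
      (commute_of_mem_center (zpow_mem hs k) y).symm)]
    exact one_mem _

theorem zpowers_le_of_normal (hG : IsJND G) (hs : s ∈ center G) (hp : (orderOf s).Prime)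
    {N : Subgroup G} (hN : N.Normal) (hN1 : N ≠ ⊥) : zpowers s ≤ N := by
  obtain ⟨h, hh⟩ := hG.exists_not_normal_zpowers
  rw [zpowers_le]
  by_contra hsN
  have hSN : ∀ t ∈ zpowers s, t ∈ N → t = 1 := fun t ht htN => by
    by_contra ht1
    exact hsN (zpowers_le.mpr htN (mem_zpowers_of_prime_orderOf hp ht ht1))
  -- otherwise `⟨h⟩ = (⟨h⟩ ⊔ N) ⊓ (⟨h⟩ ⊔ ⟨s⟩)` by the modular law, and it would be normal
  obtain ⟨n, hnN, hnhs, hnh⟩ : ∃ n ∈ N, n ∈ zpowers h ⊔ zpowers s ∧ n ∉ zpowers h := by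
    by_contra! hno
    refine hh ⟨fun τ hτ g => ?_⟩
    obtain ⟨t, ht, m, hm, hmt⟩ := mem_sup_of_normal_right.mp
      ((hG.sup_normal _ hN hN1).conj_mem τ (mem_sup_left hτ) g)
    have hmhs : m ∈ zpowers h ⊔ zpowers s := by
      rw [eq_inv_mul_of_mul_eq hmt]
      exact mul_mem (inv_mem (mem_sup_left ht))
        ((hG.sup_zpowers_normal _ hs (ne_one_of_prime_orderOf hp)).conj_mem τ (mem_sup_left hτ) g)
    rw [← hmt]
    exact mul_mem ht (hno m hm hmhs)
  obtain ⟨_, hi, j, rfl⟩ := exists_mul_zpow_eq_of_mem_sup hs hnhs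
  obtain ⟨i, rfl⟩ := mem_zpowers_iff.mp hi
  -- commutators with `n` lie in `N ⊓ ⟨s⟩ = ⊥`
  have hcen : h ^ i * s ^ j ∈ center G := mem_center_iff.mpr fun g => by
    have hgh := hG.commutatorElement_mem_zpowers_of_not_normal hs hp hh g
    refine commutatorElement_eq_one_iff_mul_comm.mp (hSN _ ?_ ?_)
    · rw [commutatorElement_mul_of_mem_center (zpow_mem hs j),
        commutatorElement_zpow_right (commute_of_mem_center (zpowers_le.mpr hs hgh) h)]
      exact zpow_mem hgh i
    · rw [commutatorElement_def]
      exact mul_mem (hN.conj_mem _ hnN g) (inv_mem hnN)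
  have hhi : h ^ i = 1 := hG.eq_one_of_mem_center_of_not_normal hh
    (by simpa using mul_mem hcen (inv_mem (zpow_mem hs j))) (zpow_mem (mem_zpowers h) i)
  rw [hhi, one_mul] at hnN hnh
  exact hnh (by rw [hSN _ (zpow_mem (mem_zpowers s) j) hnN]; exact one_mem _)

theorem mem_zpowers_of_pow_ne_one (hG : IsJND G) (hs : s ∈ center G) (hp : (orderOf s).Prime)
    {g : G} (hg : g ^ orderOf s ≠ 1) : s ∈ zpowers g := by
  by_cases hgn : (zpowers g).Normal
  · refine zpowers_le.mp (hG.zpowers_le_of_normal hs hp hgn (zpowers_ne_bot.mpr ?_))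
    rintro rfl
    exact hg (one_pow _)
  · exact absurd (hG.pow_orderOf_eq_one_of_not_normal hs (ne_one_of_prime_orderOf hp) hgn
      (mem_zpowers g)) hg

theorem pow_four_ne_one (hG : IsJND G) (hs : s ∈ center G) (hp : (orderOf s).Prime)
    [(zpowers s).Normal] {g : G} (hg : orderOf (g : G ⧸ zpowers s) = 4) : g ^ 4 ≠ 1 := by
  intro hg4
  have hgp : g ^ orderOf s ≠ 1 := by
    intro h1
    have h4 : 4 ∣ orderOf s := hg ▸ orderOf_dvd_of_pow_eq_one (by rw [← QuotientGroup.mk_pow, h1,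
      QuotientGroup.mk_one])
    have h2 := (Nat.prime_dvd_prime_iff_eq Nat.prime_two hp).mp (dvd_trans (by norm_num) h4)
    omega
  obtain ⟨k, hk⟩ := mem_zpowers_iff.mp (hG.mem_zpowers_of_pow_ne_one hs hp hgp)
  obtain ⟨m, rfl⟩ : (4 : ℤ) ∣ k := by
    rw [← Nat.cast_ofNat, ← hg, orderOf_dvd_iff_zpow_eq_one, ← QuotientGroup.mk_zpow, hk,
      QuotientGroup.eq_one_iff]
    exact mem_zpowers s
  refine ne_one_of_prime_orderOf hp ?_
  rw [← hk, zpow_mul, zpow_ofNat, hg4, one_zpow]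

theorem commutatorElement_mem_zpowers (hG : IsJND G) (hs : s ∈ center G)
    (hp : (orderOf s).Prime) (x y : G) : ⁅x, y⁆ ∈ zpowers s := by
  have := normal_zpowers_of_mem_center hs
  by_contra hxy
  have hnc : ¬Commute (x : G ⧸ zpowers s) y := by
    rw [← commutatorElement_eq_one_iff_commute]
    change ¬((⁅x, y⁆ : G) : G ⧸ zpowers s) = 1
    rwa [QuotientGroup.eq_one_iff]
  obtain ⟨X, Y, hX, hYX, hYY⟩ :=
    (hG.2 _ this (zpowers_ne_bot.mpr (ne_one_of_prime_orderOf hp))).exists_isQuaternionPair hnc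
  obtain ⟨a, rfl⟩ := QuotientGroup.mk_surjective X
  obtain ⟨b, rfl⟩ := QuotientGroup.mk_surjective Y
  have ha4 : a ^ 4 ∈ zpowers s := by
    rw [← QuotientGroup.eq_one_iff, QuotientGroup.mk_pow, ← hX, pow_orderOf_eq_one]
  rcases hp.eq_two_or_odd' with hp2 | hodd
  · have hb2 : b ^ orderOf s ≠ 1 := by
      intro hb2
      have : ((a : G ⧸ zpowers s)) ^ 2 = 1 := by
        rw [← hYX, hYY, ← QuotientGroup.mk_pow, ← hp2, hb2, QuotientGroup.mk_one]
      have := orderOf_dvd_of_pow_eq_one this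
      rw [hX] at this
      norm_num at this
    have hSb : zpowers s ≤ zpowers b := zpowers_le.mpr (hG.mem_zpowers_of_pow_ne_one hs hp hb2)
    have hd : (a ^ 2)⁻¹ * ⁅b, a⁆ ∈ zpowers s := QuotientGroup.eq.mp (by
      rw [QuotientGroup.mk_pow]; exact hYX.symm)
    have he : (b ^ 2)⁻¹ * ⁅b, a⁆ ∈ zpowers s := QuotientGroup.eq.mp (by
      rw [QuotientGroup.mk_pow]; exact hYY.symm)
    -- `a ^ 2 ≡ ⁅b, a⁆ ≡ b ^ 2` modulo `⟨s⟩ ≤ ⟨b⟩`, so `b` commutes with `a ^ 2`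
    have hab : a ^ 2 ∈ zpowers b := by
      rw [show a ^ 2 = b ^ 2 * ((b ^ 2)⁻¹ * ⁅b, a⁆) * ((a ^ 2)⁻¹ * ⁅b, a⁆)⁻¹ by group]
      exact mul_mem (mul_mem (pow_mem (mem_zpowers b) 2) (hSb he)) (inv_mem (hSb hd))
    refine hG.pow_four_ne_one hs hp hX (pow_four_eq_one_of_commutatorElement_eq
      (commute_of_mem_center (zpowers_le.mpr hs hd) a)
      (by simpa only [hp2] using pow_orderOf_eq_one_of_mem_zpowers hd)
      (mul_inv_cancel_left _ _).symm (commute_of_mem_zpowers hab).symm)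
  · refine hG.pow_four_ne_one hs hp (g := a ^ orderOf s) ?_ ?_
    · rw [QuotientGroup.mk_pow,
        Nat.Coprime.orderOf_pow (hX ▸ (Nat.coprime_two_left.mpr hodd).pow_left 2)]
      exact hX
    · rw [← pow_mul, mul_comm, pow_mul]
      exact pow_orderOf_eq_one_of_mem_zpowers ha4

end CentralPrime

end IsJND

end JND

/-- A JND group with nontrivial center is a solvable JNA group. -/
theorem jnd_center_ne_bot_jna {G : Type*} [Group G] (hG : IsJND G)
    (hZ : Subgroup.center G ≠ ⊥) :
    IsJNA G ∧ IsSolvable G := by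
  obtain ⟨s, hs, hp⟩ := hG.exists_prime_orderOf_mem_center hZ
  have hcomm := hG.commutatorElement_mem_zpowers hs hp
  refine ⟨⟨?_, fun N hN hN1 => ?_⟩, ?_⟩
  · by_contra! h
    exact hG.1 fun H => ⟨fun n hn g => by rwa [h g n, mul_inv_cancel_right]⟩
  · intro a b
    induction a using QuotientGroup.induction_on with | H a =>
    induction b using QuotientGroup.induction_on with | H b =>
    rw [← QuotientGroup.mk_mul, ← QuotientGroup.mk_mul, QuotientGroup.eq]
    refine hG.zpowers_le_of_normal hs hp hN hN1 ?_
    convert hcomm b⁻¹ a⁻¹ using 1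
    rw [commutatorElement_def]
    group
  · have := Group.isSolvable_of_comm fun a b : center G => Subtype.ext (mem_center_iff.mp b.2 a)
    have : commutator G ≤ (center G).subtype.range := by
      rw [range_subtype, commutator_def, commutator_le]
      exact fun a _ b _ => zpowers_le.mpr hs (hcomm a b)
    exact Group.isSolvable_of_ker_le_range _ (Abelianization.of) (Abelianization.ker_of G ▸ this)
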